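/- Let ν > 1 and 0 ≤ b < a. Then lim_{t→∞} t^{ν+1} (I(t) − C_ν/t^ν) = −ν C_{ν+1}; that is, I(t) = C_ν/t^ν − ν C_{ν+1}/t^{ν+1} + o(t^{-ν-1}) as t → ∞, where C_{ν+1} = (a^{2ν+2} − b^{2ν+2})/(2^{ν+1} Γ(ν+2)). -/

import Mathlib

open MeasureTheory Filter

/-- `F ν x t = (x^{2ν}/(2^ν Γ(ν))) ∫_t^∞ s^{-(ν+1)} exp(-x²/(2s)) ds`. -/
noncomputable def F (ν x t : ℝ) : ℝ :=
  (x ^ (2 * ν) / (2 ^ ν * Real.Gamma ν)) *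
    ∫ s in Set.Ioi t, s ^ (-(ν + 1)) * Real.exp (-x ^ 2 / (2 * s))

/-!
With `C_μ(x) = x^{2μ} / (2^μ Γ(μ+1))`, expanding `exp (-x²/(2s)) = 1 - x²/(2s) + O(s⁻²)` under
the integral gives `F_ν(x,t) = C_ν(x) t^{-ν} - ν C_{ν+1}(x) t^{-ν-1} + O(t^{-ν-2})`. Then
`t^{ν+1} (I(t) - C_ν/t^ν)` equals
`[t^{ν+1}(F_ν(a,t) - C_ν(a)/t^ν) - t^{ν+1}(F_ν(b,t) - C_ν(b)/t^ν) + C_ν · t F_ν(b,t)] / (1 - F_ν(b,t))`,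
whose numerator tends to `-ν (C_{ν+1}(a) - C_{ν+1}(b))` because `t F_ν(b,t) = O(t^{1-ν}) → 0`
for `ν > 1`, and whose denominator tends to `1`.
-/

open Set Topology

lemma abs_exp_neg_sub_one_add_le {y : ℝ} (hy : 0 ≤ y) :
    |Real.exp (-y) - 1 + y| ≤ y ^ 2 / 2 := by
  have lower : 1 - y ≤ Real.exp (-y) := by linarith [Real.add_one_le_exp (-y)]
  have hinv : Real.exp (-y) * Real.exp y = 1 := by rw [← Real.exp_add]; simp
  have upper : Real.exp (-y) ≤ 1 - y + y ^ 2 / 2 := by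
    nlinarith [mul_le_mul_of_nonneg_left (Real.quadratic_le_exp_of_nonneg hy) (Real.exp_pos (-y)).le]
  rw [abs_le]; constructor <;> nlinarith

lemma integral_Ioi_rpow_neg_add_one {p t : ℝ} (hp : 0 < p) (ht : 0 < t) :
    ∫ s in Ioi t, s ^ (-(p + 1)) = 1 / (p * t ^ p) := by
  rw [integral_Ioi_rpow_of_lt (by linarith) ht, show -(p + 1) + 1 = -p by ring, neg_div_neg_eq,
    Real.rpow_neg ht.le]
  field_simp

section Integrand

variable {ν x t : ℝ}

lemma integrableOn_rpow_mul_exp_Ioi (hν : 0 < ν) (ht : 0 < t) :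
    IntegrableOn (fun s => s ^ (-(ν + 1)) * Real.exp (-x ^ 2 / (2 * s))) (Ioi t) := by
  refine (integrableOn_Ioi_rpow_of_lt (by linarith) ht).mul_bdd (c := 1)
    (by fun_prop : Measurable fun s => Real.exp (-x ^ 2 / (2 * s))).aestronglyMeasurable ?_
  filter_upwards [ae_restrict_mem measurableSet_Ioi] with s hs
  have hs0 : 0 < s := ht.trans hs
  rw [Real.norm_eq_abs, abs_of_pos (Real.exp_pos _), Real.exp_le_one_iff]
  exact div_nonpos_of_nonpos_of_nonneg (by nlinarith) (by positivity)

lemma abs_rpow_mul_exp_sub_le {s : ℝ} (hs : 0 < s) :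
    |s ^ (-(ν + 1)) * Real.exp (-x ^ 2 / (2 * s)) - (s ^ (-(ν + 1)) - x ^ 2 / 2 * s ^ (-(ν + 2)))|
      ≤ x ^ 4 / 8 * s ^ (-(ν + 3)) := by
  have h2 : s ^ (-(ν + 2)) = s ^ (-(ν + 1)) / s := by
    rw [show -(ν + 2) = -(ν + 1) - 1 by ring, Real.rpow_sub_one hs.ne']
  have h3 : s ^ (-(ν + 3)) = s ^ (-(ν + 1)) / s ^ 2 := by
    rw [show -(ν + 3) = -(ν + 1) - 2 by ring, Real.rpow_sub hs, Real.rpow_two]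
  have hpos : 0 < s ^ (-(ν + 1)) := Real.rpow_pos_of_pos hs _
  calc _ = s ^ (-(ν + 1)) * |Real.exp (-(x ^ 2 / (2 * s))) - 1 + x ^ 2 / (2 * s)| := by
        rw [← abs_of_pos hpos, ← abs_mul, abs_of_pos hpos, h2, neg_div]
        congr 1; field_simp; ring
    _ ≤ s ^ (-(ν + 1)) * ((x ^ 2 / (2 * s)) ^ 2 / 2) := by
        gcongr; exact abs_exp_neg_sub_one_add_le (by positivity)
    _ = x ^ 4 / 8 * s ^ (-(ν + 3)) := by rw [h3]; field_simp; ring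

lemma abs_integral_rpow_mul_exp_sub_le (hν : 0 < ν) (ht : 0 < t) :
    |(∫ s in Ioi t, s ^ (-(ν + 1)) * Real.exp (-x ^ 2 / (2 * s)))
        - (1 / (ν * t ^ ν) - x ^ 2 / 2 * (1 / ((ν + 1) * t ^ (ν + 1))))|
      ≤ x ^ 4 / 8 * (1 / ((ν + 2) * t ^ (ν + 2))) := by
  have hint1 : IntegrableOn (fun s : ℝ => s ^ (-(ν + 1))) (Ioi t) :=
    integrableOn_Ioi_rpow_of_lt (by linarith) ht
  have hint2 : IntegrableOn (fun s : ℝ => s ^ (-(ν + 2))) (Ioi t) :=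
    integrableOn_Ioi_rpow_of_lt (by linarith) ht
  have hint3 : IntegrableOn (fun s : ℝ => s ^ (-(ν + 3))) (Ioi t) :=
    integrableOn_Ioi_rpow_of_lt (by linarith) ht
  have e1 := integral_Ioi_rpow_neg_add_one hν ht
  have e2 : ∫ s in Ioi t, s ^ (-(ν + 2)) = 1 / ((ν + 1) * t ^ (ν + 1)) := by
    rw [show ν + 2 = ν + 1 + 1 by ring]; exact integral_Ioi_rpow_neg_add_one (by linarith) ht
  have e3 : ∫ s in Ioi t, s ^ (-(ν + 3)) = 1 / ((ν + 2) * t ^ (ν + 2)) := by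
    rw [show ν + 3 = ν + 2 + 1 by ring]; exact integral_Ioi_rpow_neg_add_one (by linarith) ht
  have happrox : IntegrableOn (fun s : ℝ => s ^ (-(ν + 1)) - x ^ 2 / 2 * s ^ (-(ν + 2))) (Ioi t) :=
    hint1.sub (hint2.const_mul _)
  calc _ = ‖∫ s in Ioi t, (s ^ (-(ν + 1)) * Real.exp (-x ^ 2 / (2 * s))
          - (s ^ (-(ν + 1)) - x ^ 2 / 2 * s ^ (-(ν + 2))))‖ := by
        rw [integral_sub (integrableOn_rpow_mul_exp_Ioi hν ht) happrox,
          integral_sub hint1 (hint2.const_mul _), integral_const_mul, e1, e2,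
          Real.norm_eq_abs]
    _ ≤ ∫ s in Ioi t, x ^ 4 / 8 * s ^ (-(ν + 3)) := by
        refine norm_integral_le_of_norm_le (hint3.const_mul _) ?_
        filter_upwards [ae_restrict_mem measurableSet_Ioi] with s hs
        exact abs_rpow_mul_exp_sub_le (ht.trans hs)
    _ = _ := by rw [integral_const_mul, e3]

end Integrand

noncomputable def coeffF (μ x : ℝ) : ℝ := x ^ (2 * μ) / (2 ^ μ * Real.Gamma (μ + 1))

section Expansion

variable {ν x t : ℝ}

lemma abs_F_sub_le (hν : 0 < ν) (hx : 0 ≤ x) (ht : 0 < t) :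
    |F ν x t - (coeffF ν x / t ^ ν - ν * coeffF (ν + 1) x / t ^ (ν + 1))|
      ≤ x ^ (2 * ν) / (2 ^ ν * Real.Gamma ν) * (x ^ 4 / 8) / (ν + 2) / t ^ (ν + 2) := by
  have hΓ : 0 < Real.Gamma ν := Real.Gamma_pos_of_pos hν
  have hc : 0 ≤ x ^ (2 * ν) / (2 ^ ν * Real.Gamma ν) := by positivity
  have hterms : x ^ (2 * ν) / (2 ^ ν * Real.Gamma ν) *
        (1 / (ν * t ^ ν) - x ^ 2 / 2 * (1 / ((ν + 1) * t ^ (ν + 1))))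
      = coeffF ν x / t ^ ν - ν * coeffF (ν + 1) x / t ^ (ν + 1) := by
    have hΓ1 : Real.Gamma (ν + 1) = ν * Real.Gamma ν := Real.Gamma_add_one hν.ne'
    have hΓ2 : Real.Gamma (ν + 1 + 1) = (ν + 1) * (ν * Real.Gamma ν) := by
      rw [Real.Gamma_add_one (by linarith), hΓ1]
    have hx2 : x ^ (2 * (ν + 1)) = x ^ (2 * ν) * x ^ 2 := by
      rw [show 2 * (ν + 1) = 2 * ν + 2 by ring, Real.rpow_add' hx (by linarith), Real.rpow_two]
    rw [coeffF, coeffF, hΓ1, hΓ2, hx2, Real.rpow_add_one two_ne_zero, Real.rpow_add_one ht.ne']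
    field_simp
  rw [F, ← hterms, ← mul_sub, abs_mul, abs_of_nonneg hc]
  calc _ ≤ x ^ (2 * ν) / (2 ^ ν * Real.Gamma ν) * (x ^ 4 / 8 * (1 / ((ν + 2) * t ^ (ν + 2)))) :=
        mul_le_mul_of_nonneg_left (abs_integral_rpow_mul_exp_sub_le hν ht) hc
    _ = _ := by field_simp

lemma tendsto_F_expansion (hν : 0 < ν) (hx : 0 ≤ x) :
    Tendsto (fun t => t ^ (ν + 1) * (F ν x t - coeffF ν x / t ^ ν)) atTop
      (𝓝 (-(ν * coeffF (ν + 1) x))) := by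
  set K := x ^ (2 * ν) / (2 ^ ν * Real.Gamma ν) * (x ^ 4 / 8) / (ν + 2)
  rw [← tendsto_sub_nhds_zero_iff]
  refine squeeze_zero_norm' (a := fun t => K / t) ?_ (tendsto_const_nhds.div_atTop tendsto_id)
  filter_upwards [eventually_gt_atTop 0] with t ht
  have hsucc := Real.rpow_add_one ht.ne' ν
  have hsucc2 : t ^ (ν + 2) = t ^ (ν + 1) * t := by
    rw [show ν + 2 = ν + 1 + 1 by ring, Real.rpow_add_one ht.ne']
  have hrem : t ^ (ν + 1) * (F ν x t - coeffF ν x / t ^ ν) - -(ν * coeffF (ν + 1) x)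
      = t ^ (ν + 1) * (F ν x t - (coeffF ν x / t ^ ν - ν * coeffF (ν + 1) x / t ^ (ν + 1))) := by
    rw [hsucc]; field_simp; ring
  calc _ = t ^ (ν + 1) * |F ν x t - (coeffF ν x / t ^ ν - ν * coeffF (ν + 1) x / t ^ (ν + 1))| := by
        rw [hrem, Real.norm_eq_abs, abs_mul, abs_of_pos (Real.rpow_pos_of_pos ht _)]
    _ ≤ t ^ (ν + 1) * (K / t ^ (ν + 2)) := by gcongr; exact abs_F_sub_le hν hx ht
    _ = K / t := by rw [hsucc2]; field_simp

lemma tendsto_mul_F_atTop (hν : 1 < ν) (hx : 0 ≤ x) :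
    Tendsto (fun t => t * F ν x t) atTop (𝓝 0) := by
  have h1 : Tendsto (fun t : ℝ => coeffF ν x / t ^ (ν - 1)) atTop (𝓝 0) :=
    tendsto_const_nhds.div_atTop (tendsto_rpow_atTop (by linarith))
  have h2 : Tendsto (fun t : ℝ => (t ^ ν)⁻¹) atTop (𝓝 0) :=
    tendsto_inv_atTop_zero.comp (tendsto_rpow_atTop (by linarith))
  have hlim := h1.add (h2.mul (tendsto_F_expansion (zero_lt_one.trans hν) hx))
  rw [zero_mul, add_zero] at hlim
  refine hlim.congr' ?_
  filter_upwards [eventually_gt_atTop 0] with t ht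
  have hν1 : t ^ ν = t ^ (ν - 1) * t := by
    rw [← Real.rpow_add_one ht.ne', sub_add_cancel]
  rw [Real.rpow_add_one ht.ne', hν1]
  field_simp
  ring

end Expansion

lemma tendsto_rpow_mul_div_one_sub_sub {f g : ℝ → ℝ} {ν α β Lf Lg : ℝ}
    (hf : Tendsto (fun t => t ^ (ν + 1) * (f t - α / t ^ ν)) atTop (𝓝 Lf))
    (hg : Tendsto (fun t => t ^ (ν + 1) * (g t - β / t ^ ν)) atTop (𝓝 Lg))
    (hg₀ : Tendsto (fun t => t * g t) atTop (𝓝 0)) :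
    Tendsto (fun t => t ^ (ν + 1) * ((f t - g t) / (1 - g t) - (α - β) / t ^ ν)) atTop
      (𝓝 (Lf - Lg)) := by
  have hg_zero : Tendsto g atTop (𝓝 0) := by
    have := tendsto_inv_atTop_zero.mul hg₀
    rw [zero_mul] at this
    refine this.congr' ?_
    filter_upwards [eventually_gt_atTop 0] with t ht
    field_simp
  have hlim := ((hf.sub hg).add (hg₀.const_mul (α - β))).div
    (tendsto_const_nhds.sub hg_zero) (by norm_num : (1 : ℝ) - 0 ≠ 0)
  rw [mul_zero, add_zero, sub_zero, div_one] at hlim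
  refine hlim.congr' ?_
  filter_upwards [eventually_gt_atTop 0, hg_zero.eventually_lt_const one_pos] with t ht hgt
  have hden : 1 - g t ≠ 0 := (sub_pos.mpr hgt).ne'
  simp only [Pi.div_apply]
  rw [Real.rpow_add_one ht.ne']
  field_simp
  ring

theorem stmt_16 (ν a b : ℝ) (hν : 1 < ν) (hb : 0 ≤ b) (hba : b < a) :
    Tendsto (fun t : ℝ =>
        t ^ (ν + 1) *
          ((F ν a t - F ν b t) / (1 - F ν b t) -
            ((a ^ (2 * ν) - b ^ (2 * ν)) / (2 ^ ν * Real.Gamma (ν + 1))) / t ^ ν))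
      atTop
      (nhds (-(ν * ((a ^ (2 * ν + 2) - b ^ (2 * ν + 2)) /
        (2 ^ (ν + 1) * Real.Gamma (ν + 2)))))) := by
  have hν₀ : 0 < ν := zero_lt_one.trans hν
  have h := tendsto_rpow_mul_div_one_sub_sub
    (tendsto_F_expansion hν₀ (hb.trans hba.le)) (tendsto_F_expansion hν₀ hb)
    (tendsto_mul_F_atTop hν hb)
  simp only [coeffF, ← sub_div, show 2 * (ν + 1) = 2 * ν + 2 by ring,
    show ν + 1 + 1 = ν + 2 by ring] at h
  convert h using 2
  ring
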